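/- arXiv:2405.07110 — 3 statements merged into one kernel-verified Lean document; each statement's English description precedes it below -/
import Mathlib

section
/- Let n ≥ 2. The map that sends a pair (w, p), where w is a tree representation on {1,…,n−1} and p ∈ {2,…,2n−2}, to the sequence obtained from w by inserting the value n so that it becomes the p-th entry and then appending the value n at the end, is a bijection from (tree representations on {1,…,n−1}) × {2,…,2n−2} onto the set of tree representations on {1,…,n}. -/
/-- 0-indexed position of the first occurrence of `x` in `v`. -/
def firstOcc (v : List ℕ) (x : ℕ) : ℕ := v.idxOf x

/-- 0-indexed position of the second (= last, when `x` occurs exactly twice)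
occurrence of `x` in `v`. -/
def secondOcc (v : List ℕ) (x : ℕ) : ℕ := v.length - 1 - v.reverse.idxOf x

/-- `v` is a tree representation on `{1,…,n}`: it has length `2n`, entries in
`{1,…,n}`, every `i ∈ {1,…,n}` occurs exactly twice, the first entry is `1`,
for every `i ∈ {2,…,n}` the first occurrence of `i` appears strictly before the
second occurrence of `i-1`, and the second occurrence of `i` appears strictly
after the second occurrence of `i-1`. -/
def IsTreeRep (n : ℕ) (v : List ℕ) : Prop :=
  v.length = 2 * n ∧
  (∀ x ∈ v, 1 ≤ x ∧ x ≤ n) ∧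
  (∀ i, 1 ≤ i → i ≤ n → v.count i = 2) ∧
  v.getD 0 0 = 1 ∧
  (∀ i, 2 ≤ i → i ≤ n → firstOcc v i < secondOcc v (i - 1)) ∧
  (∀ i, 2 ≤ i → i ≤ n → secondOcc v (i - 1) < secondOcc v i)

/-!
The largest value `n` of a tree representation `v` on `{1,…,n}` is its last entry (second
occurrences increase with the value), and its other copy sits somewhere inside, so
`v = t ++ n :: d ++ [n]`. Deleting both copies of `n` leaves `w = t ++ d`, in which all other
entries keep their relative order; hence the conditions for `i < n` hold in `v` iff they hold in
`w`. As the second `n - 1` is the last entry of `w`, it lands at position `2n - 2` of `v`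
(counting from `0`), so the conditions for `i = n` say exactly that `1 ≤ |t| < 2n - 2`, i.e. that
the first `n` is the `p`-th entry of `v` with `2 ≤ p ≤ 2n - 2`.
-/

namespace List

theorem insertIdx_eq_take_append_cons_drop {α : Type*} (a : α) :
    ∀ (l : List α) {q : ℕ}, q ≤ l.length → l.insertIdx q a = l.take q ++ a :: l.drop q
  | _, 0, _ => by simp
  | [], _ + 1, h => by simp at h
  | b :: l, q + 1, h => by
    simp [insertIdx_succ_cons, insertIdx_eq_take_append_cons_drop a l (by simpa using h)]

theorem insertIdx_inj_of_notMem {α : Type*} {a : α} {l l' : List α} {q q' : ℕ} (hl : a ∉ l)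
    (hq : q ≤ l.length) (hq' : q' ≤ l'.length)
    (h : l.insertIdx q a = l'.insertIdx q' a) : q = q' ∧ l = l' := by
  rw [insertIdx_eq_take_append_cons_drop a l hq, insertIdx_eq_take_append_cons_drop a l' hq'] at h
  obtain ⟨ht, -, hd⟩ := (append_cons_inj_of_notMem (fun h ↦ hl (take_subset _ _ h))
    (fun h ↦ hl (drop_subset _ _ h))).1 h
  have hlen := congrArg length ht
  simp only [length_take] at hlen
  refine ⟨by omega, ?_⟩
  rw [← take_append_drop q l, ← take_append_drop q' l', ht, hd]

end List

section Occurrences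

variable {l l₁ l₂ : List ℕ} {a x : ℕ}

theorem firstOcc_append_of_mem (l₂ : List ℕ) (h : x ∈ l₁) :
    firstOcc (l₁ ++ l₂) x = firstOcc l₁ x :=
  List.idxOf_append_of_mem h

theorem firstOcc_append_of_notMem (l₂ : List ℕ) (h : x ∉ l₁) :
    firstOcc (l₁ ++ l₂) x = l₁.length + firstOcc l₂ x :=
  List.idxOf_append_of_notMem h

theorem firstOcc_cons_of_ne (l : List ℕ) (h : a ≠ x) : firstOcc (a :: l) x = firstOcc l x + 1 :=
  List.idxOf_cons_ne l h

theorem firstOcc_lt_length (h : x ∈ l) : firstOcc l x < l.length :=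
  List.idxOf_lt_length_iff.2 h

theorem secondOcc_append_of_mem (l₁ : List ℕ) (h : x ∈ l₂) :
    secondOcc (l₁ ++ l₂) x = l₁.length + secondOcc l₂ x := by
  have := List.idxOf_lt_length_iff.2 (List.mem_reverse.2 h)
  simp only [secondOcc, List.reverse_append, List.idxOf_append_of_mem (List.mem_reverse.2 h),
    List.length_append, List.length_reverse] at *
  omega

theorem secondOcc_append_of_notMem (l₁ : List ℕ) (h : x ∉ l₂) :
    secondOcc (l₁ ++ l₂) x = secondOcc l₁ x := by
  simp only [secondOcc, List.reverse_append,
    List.idxOf_append_of_notMem (mt List.mem_reverse.1 h), List.length_append,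
    List.length_reverse]
  omega

theorem secondOcc_lt_length (h : x ∈ l) : secondOcc l x < l.length := by
  have := List.length_pos_of_mem h
  unfold secondOcc; omega

theorem secondOcc_concat_self (l : List ℕ) (a : ℕ) : secondOcc (l ++ [a]) a = l.length := by
  simp [secondOcc]

end Occurrences

/-- The `ℕ`-valued analogue of `Fin.succAbove`: the position that the entry at position `k`
moves to when a new entry is inserted at position `q`. -/
def shiftAbove (q k : ℕ) : ℕ := if k < q then k else k + 1

theorem shiftAbove_strictMono (q : ℕ) : StrictMono (shiftAbove q) := by
  intro j k h
  unfold shiftAbove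
  split_ifs <;> omega

section Insertion

variable {t d : List ℕ} {a x y : ℕ}

theorem firstOcc_insert_of_ne (hx : x ≠ a) (hmem : x ∈ t ++ d) :
    firstOcc (t ++ a :: d ++ [a]) x = shiftAbove t.length (firstOcc (t ++ d) x) := by
  rw [List.append_assoc, List.cons_append]
  by_cases ht : x ∈ t
  · rw [firstOcc_append_of_mem _ ht, firstOcc_append_of_mem _ ht, shiftAbove,
      if_pos (firstOcc_lt_length ht)]
  · have hd : x ∈ d := (List.mem_append.1 hmem).resolve_left ht
    rw [firstOcc_append_of_notMem _ ht, firstOcc_append_of_notMem _ ht,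
      firstOcc_cons_of_ne _ hx.symm, firstOcc_append_of_mem _ hd, shiftAbove, if_neg (by omega)]
    omega

theorem secondOcc_insert_of_ne (hx : x ≠ a) (hmem : x ∈ t ++ d) :
    secondOcc (t ++ a :: d ++ [a]) x = shiftAbove t.length (secondOcc (t ++ d) x) := by
  have hxa : x ∉ [a] := by simpa using hx
  rw [secondOcc_append_of_notMem _ hxa]
  by_cases hd : x ∈ d
  · rw [secondOcc_append_of_mem t (List.mem_cons_of_mem a hd), secondOcc_append_of_mem t hd,
      ← List.singleton_append, secondOcc_append_of_mem _ hd, shiftAbove, if_neg (by omega)]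
    simp only [List.length_singleton]
    omega
  · have ht : x ∈ t := (List.mem_append.1 hmem).resolve_right hd
    rw [secondOcc_append_of_notMem t (by simp [hx, hd]), secondOcc_append_of_notMem t hd,
      shiftAbove, if_pos (secondOcc_lt_length ht)]

theorem firstOcc_insert_self (d : List ℕ) (h : a ∉ t) :
    firstOcc (t ++ a :: d ++ [a]) a = t.length := by
  rw [List.append_assoc, firstOcc_append_of_notMem _ h]
  simp [firstOcc]

theorem secondOcc_insert_self (t d : List ℕ) (a : ℕ) :
    secondOcc (t ++ a :: d ++ [a]) a = (t ++ d).length + 1 := by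
  rw [secondOcc_concat_self]
  simp only [List.length_append, List.length_cons]
  omega

theorem count_insert_of_ne (hx : x ≠ a) : (t ++ a :: d ++ [a]).count x = (t ++ d).count x := by
  simp [Ne.symm hx]

theorem count_insert_self (h : a ∉ t ++ d) : (t ++ a :: d ++ [a]).count a = 2 := by
  simp only [List.mem_append, not_or] at h
  simp [List.count_eq_zero.2 h.1, List.count_eq_zero.2 h.2]

theorem firstOcc_lt_secondOcc_insert_iff (hx : x ≠ a) (hy : y ≠ a) (hxw : x ∈ t ++ d)
    (hyw : y ∈ t ++ d) :
    firstOcc (t ++ a :: d ++ [a]) x < secondOcc (t ++ a :: d ++ [a]) y ↔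
      firstOcc (t ++ d) x < secondOcc (t ++ d) y := by
  rw [firstOcc_insert_of_ne hx hxw, secondOcc_insert_of_ne hy hyw,
    (shiftAbove_strictMono _).lt_iff_lt]

theorem secondOcc_lt_secondOcc_insert_iff (hx : x ≠ a) (hy : y ≠ a) (hxw : x ∈ t ++ d)
    (hyw : y ∈ t ++ d) :
    secondOcc (t ++ a :: d ++ [a]) x < secondOcc (t ++ a :: d ++ [a]) y ↔
      secondOcc (t ++ d) x < secondOcc (t ++ d) y := by
  rw [secondOcc_insert_of_ne hx hxw, secondOcc_insert_of_ne hy hyw,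
    (shiftAbove_strictMono _).lt_iff_lt]

end Insertion

namespace IsTreeRep

variable {m : ℕ} {w t d : List ℕ}

theorem mem (h : IsTreeRep m w) {i : ℕ} (hi : 1 ≤ i) (him : i ≤ m) : i ∈ w :=
  List.count_pos_iff.1 (by rw [h.2.2.1 i hi him]; omega)

theorem succ_notMem (h : IsTreeRep m w) : m + 1 ∉ w := fun hw ↦ by
  have := h.2.1 _ hw
  omega

theorem strictMonoOn_secondOcc (h : IsTreeRep m w) : StrictMonoOn (secondOcc w) (Set.Icc 1 m) :=
  strictMonoOn_of_lt_add_one Set.ordConnected_Icc fun i _ hi hi' ↦ by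
    simpa using h.2.2.2.2.2 (i + 1) (by simp at hi; omega) hi'.2

theorem getLast_eq (h : IsTreeRep m w) (hm : 1 ≤ m) (hw : w ≠ []) : w.getLast hw = m := by
  set j := w.getLast hw
  have hj : 1 ≤ j ∧ j ≤ m := h.2.1 j (List.getLast_mem hw)
  have hsec : secondOcc w j = w.length - 1 := by
    conv_lhs => rw [← List.dropLast_append_getLast hw]
    rw [secondOcc_concat_self, List.length_dropLast]
  by_contra hjm
  have := h.strictMonoOn_secondOcc hj (Set.mem_Icc.2 ⟨hm, le_rfl⟩) (by omega)
  have := secondOcc_lt_length (h.mem hm le_rfl)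
  omega

theorem eq_concat (h : IsTreeRep m w) (hm : 1 ≤ m) : w = w.dropLast ++ [m] := by
  have hw : w ≠ [] := List.ne_nil_of_mem (h.mem hm le_rfl)
  rw [← h.getLast_eq hm hw, List.dropLast_append_getLast]

theorem secondOcc_self (h : IsTreeRep m w) (hm : 1 ≤ m) : secondOcc w m = 2 * m - 1 := by
  rw [h.eq_concat hm, secondOcc_concat_self, List.length_dropLast, h.1]

theorem insert (hw : IsTreeRep m (t ++ d)) (hm : 1 ≤ m) (ht : t ≠ []) (htm : t.length < 2 * m) :
    IsTreeRep (m + 1) (t ++ (m + 1) :: d ++ [m + 1]) := by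
  have hmem : ∀ i, 1 ≤ i → i ≤ m → i ∈ t ++ d := fun i ↦ hw.mem
  have hsec : secondOcc (t ++ (m + 1) :: d ++ [m + 1]) m = 2 * m := by
    rw [secondOcc_insert_of_ne (by omega) (hmem m hm le_rfl), hw.secondOcc_self hm,
      shiftAbove, if_neg (by omega)]
    omega
  have ha := hw.succ_notMem
  obtain ⟨hlen, hbound, hcount, hhead, hfirst, hsecond⟩ := hw
  refine ⟨by simp at hlen ⊢; omega, ?_, fun i hi hi' ↦ ?_, ?_, fun i hi hi' ↦ ?_,
    fun i hi hi' ↦ ?_⟩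
  · intro x hx
    obtain rfl | hx : x = m + 1 ∨ x ∈ t ++ d := by simp at hx ⊢; tauto
    · omega
    · have := hbound x hx
      omega
  · rcases eq_or_lt_of_le hi' with rfl | hi'
    · exact count_insert_self ha
    · rw [count_insert_of_ne (by omega), hcount i hi (by omega)]
  · obtain ⟨b, t, rfl⟩ := List.exists_cons_of_ne_nil ht
    simpa using hhead
  · rcases eq_or_lt_of_le hi' with rfl | hi'
    · rw [firstOcc_insert_self d (fun h ↦ ha (List.mem_append_left d h)), Nat.add_sub_cancel,
        hsec]
      exact htm
    · rw [firstOcc_lt_secondOcc_insert_iff (by omega) (by omega)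
        (hmem i (by omega) (by omega)) (hmem (i - 1) (by omega) (by omega))]
      exact hfirst i hi (by omega)
  · rcases eq_or_lt_of_le hi' with rfl | hi'
    · rw [secondOcc_insert_self, Nat.add_sub_cancel, hsec, hlen]
      omega
    · rw [secondOcc_lt_secondOcc_insert_iff (by omega) (by omega)
        (hmem (i - 1) (by omega) (by omega)) (hmem i (by omega) (by omega))]
      exact hsecond i hi (by omega)

theorem of_insert (hv : IsTreeRep (m + 1) (t ++ (m + 1) :: d ++ [m + 1])) (hm : 1 ≤ m)
    (ha : m + 1 ∉ t ++ d) :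
    IsTreeRep m (t ++ d) ∧ t ≠ [] ∧ t.length < 2 * m := by
  obtain ⟨hlen, hbound, hcount, hhead, hfirst, hsecond⟩ := hv
  have hlen' : (t ++ d).length = 2 * m := by simp at hlen ⊢; omega
  have hcount' : ∀ i, 1 ≤ i → i ≤ m → (t ++ d).count i = 2 := fun i hi hi' ↦ by
    rw [← hcount i hi (by omega), count_insert_of_ne (by omega)]
  have hmem : ∀ i, 1 ≤ i → i ≤ m → i ∈ t ++ d := fun i hi hi' ↦
    List.count_pos_iff.1 (by rw [hcount' i hi hi']; omega)
  have ht : t ≠ [] := by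
    rintro rfl
    simp at hhead
    omega
  have htop := hfirst (m + 1) (by omega) le_rfl
  have htop' := hsecond (m + 1) (by omega) le_rfl
  rw [firstOcc_insert_self d (fun h ↦ ha (List.mem_append_left d h))] at htop
  rw [secondOcc_insert_self, hlen'] at htop'
  refine ⟨⟨hlen', fun x hx ↦ ?_, hcount', ?_, fun i hi hi' ↦ ?_, fun i hi hi' ↦ ?_⟩, ht,
    by simp at htop htop'; omega⟩
  · have := hbound x (by simp at hx ⊢; tauto)
    have := ne_of_mem_of_not_mem hx ha
    omega
  · obtain ⟨b, t, rfl⟩ := List.exists_cons_of_ne_nil ht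
    simpa using hhead
  · rw [← firstOcc_lt_secondOcc_insert_iff (a := m + 1) (by omega) (by omega)
      (hmem i (by omega) hi') (hmem (i - 1) (by omega) (by omega))]
    exact hfirst i hi (by omega)
  · rw [← secondOcc_lt_secondOcc_insert_iff (a := m + 1) (by omega) (by omega)
      (hmem (i - 1) (by omega) (by omega)) (hmem i (by omega) hi')]
    exact hsecond i hi (by omega)

theorem insertIdx (hw : IsTreeRep m w) (hm : 1 ≤ m) {q : ℕ} (hq : 1 ≤ q) (hq' : q < 2 * m) :
    IsTreeRep (m + 1) (w.insertIdx q (m + 1) ++ [m + 1]) := by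
  rw [List.insertIdx_eq_take_append_cons_drop _ _ (by rw [hw.1]; omega)]
  refine IsTreeRep.insert (by rwa [List.take_append_drop]) hm ?_ ?_
  · exact List.ne_nil_of_length_pos (by simp [hw.1]; omega)
  · simp [hw.1]; omega

theorem exists_eq_insert (hv : IsTreeRep (m + 1) w) :
    ∃ t d, m + 1 ∉ t ++ d ∧ w = t ++ (m + 1) :: d ++ [m + 1] := by
  have hcount : w.dropLast.count (m + 1) = 1 := by
    have := hv.2.2.1 (m + 1) (by omega) le_rfl
    rw [hv.eq_concat (by omega), List.count_append] at this
    simpa using this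
  obtain ⟨t, d, htd⟩ :=
    List.append_of_mem (List.count_pos_iff.1 (by omega : 0 < w.dropLast.count (m + 1)))
  refine ⟨t, d, fun h ↦ ?_, by rw [hv.eq_concat (by omega), htd]⟩
  rw [htd] at hcount
  have : (t ++ d).count (m + 1) = 0 := by simp at hcount ⊢; omega
  exact List.count_eq_zero.1 this h

end IsTreeRep

/-- For `n ≥ 2`, the map sending a pair `(w, p)`, where `w` is a tree
representation on `{1,…,n−1}` and `p ∈ {2,…,2n−2}` (a 1-indexed position), to
the sequence obtained from `w` by inserting the value `n` so that it becomes
the `p`-th entry and then appending the value `n` at the end, is a bijection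
onto the set of tree representations on `{1,…,n}`. -/
theorem stmt2 (n : ℕ) (hn : 2 ≤ n) :
    Set.BijOn (fun wp : List ℕ × ℕ => (wp.1.insertIdx (wp.2 - 1) n) ++ [n])
      {wp : List ℕ × ℕ | IsTreeRep (n - 1) wp.1 ∧ 2 ≤ wp.2 ∧ wp.2 ≤ 2 * n - 2}
      {v : List ℕ | IsTreeRep n v} := by
  obtain ⟨m, rfl⟩ : ∃ m, n = m + 1 := ⟨n - 1, by omega⟩
  have hm : 1 ≤ m := by omega
  simp only [Nat.add_sub_cancel]
  refine ⟨?_, ?_, ?_⟩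
  · rintro ⟨w, p⟩ ⟨hw, hp, hp'⟩
    exact hw.insertIdx hm (by omega) (by omega)
  · rintro ⟨w, p⟩ ⟨hw, hp, hp'⟩ ⟨w', p'⟩ ⟨hw', hp₂, hp₂'⟩ h
    obtain ⟨hpp, rfl⟩ := List.insertIdx_inj_of_notMem hw.succ_notMem
      (by rw [hw.1]; omega) (by rw [hw'.1]; omega) (List.append_cancel_right h)
    simp only [Prod.mk.injEq, true_and]
    omega
  · intro v hv
    obtain ⟨t, d, ha, rfl⟩ := hv.exists_eq_insert
    obtain ⟨hw, ht, htm⟩ := hv.of_insert hm ha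
    have := List.length_pos_of_ne_nil ht
    refine ⟨(t ++ d, t.length + 1), ⟨hw, by omega, by omega⟩, ?_⟩
    simp [List.insertIdx_eq_take_append_cons_drop]
end

section
/- Let n ≥ 2 and let v be a tree representation on {1,…,n}. Then every first occurrence of a value in v appears strictly before the second occurrence of n−1; consequently, the last entry v_{2n} is the second occurrence of n, the entry v_{2n−1} is the second occurrence of n−1, and the subsequence of v formed by the second occurrences, read left to right, is exactly (1,2,…,n). -/
/-- The subsequence of `v` formed by the entries that are second occurrences of
their value (an entry at index `j` is a second occurrence iff its value already
appears among the earlier entries `v.take j`), read left to right. -/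
def secondOccsSubseq (v : List ℕ) : List ℕ :=
  ((v.zipIdx.map Prod.swap).filter fun p => (v.take p.1).contains p.2).map Prod.snd

/-!
Condition (4) makes `secondOcc v` strictly increasing on `{1,…,n}`. Hence the first occurrence
of any `x < n` precedes its second occurrence, which is at most that of `n - 1`, while for
`x = n` this is condition (3). So every position after the second occurrence of `n - 1` carries
the second occurrence of some value larger than `n - 1`, i.e. of `n`: there is exactly one
such position. Finally, the second occurrences read left to right are the values sorted by
`secondOcc v`, which is the increasing order of `{1,…,n}`.
-/

section Occurrences

variable {v : List ℕ} {x k : ℕ}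

theorem firstOcc_lt_length_s4 (hx : x ∈ v) : firstOcc v x < v.length :=
  List.idxOf_lt_length_iff.2 hx

theorem getElem_firstOcc (hx : x ∈ v) : v[firstOcc v x]'(firstOcc_lt_length_s4 hx) = x :=
  List.getElem_idxOf _

theorem firstOcc_le_of_getElem_eq (hk : k < v.length) (hvk : v[k] = x) : firstOcc v x ≤ k := by
  by_contra! hlt
  have := List.not_of_lt_findIdx (p := (· == x)) hlt
  simp [hvk] at this

theorem secondOcc_lt_length_s4 (hx : x ∈ v) : secondOcc v x < v.length := by
  have := List.length_pos_iff.2 (List.ne_nil_of_mem hx)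
  unfold secondOcc
  omega

theorem getElem_secondOcc (hx : x ∈ v) : v[secondOcc v x]'(secondOcc_lt_length_s4 hx) = x := by
  have h := List.getElem_idxOf (List.idxOf_lt_length_iff.2 (List.mem_reverse.2 hx))
  rw [List.getElem_reverse] at h
  simpa [secondOcc] using h

theorem getD_secondOcc (hx : x ∈ v) : v.getD (secondOcc v x) 0 = x := by
  rw [List.getD_eq_getElem _ _ (secondOcc_lt_length_s4 hx), getElem_secondOcc hx]

theorem le_secondOcc_of_getElem_eq (hk : k < v.length) (hvk : v[k] = x) : k ≤ secondOcc v x := by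
  by_contra! hlt
  have hrev : v.length - 1 - k < v.reverse.idxOf x := by
    have := List.idxOf_lt_length_iff.2 (List.mem_reverse.2 (hvk ▸ List.getElem_mem hk))
    simp only [secondOcc, List.length_reverse] at hlt this
    omega
  have := List.not_of_lt_findIdx (p := (· == x)) hrev
  rw [List.getElem_reverse] at this
  simp [show v.length - 1 - (v.length - 1 - k) = k by omega, hvk] at this

theorem mem_take_iff_firstOcc_lt : x ∈ v.take k ↔ x ∈ v ∧ firstOcc v x < k := by
  constructor
  · intro h
    obtain ⟨i, hi, hvi⟩ := List.mem_take_iff_getElem.1 h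
    exact ⟨hvi ▸ List.getElem_mem _, by have := firstOcc_le_of_getElem_eq _ hvi; omega⟩
  · rintro ⟨hx, hk⟩
    exact List.mem_take_iff_getElem.2
      ⟨firstOcc v x, lt_min hk (firstOcc_lt_length_s4 hx), getElem_firstOcc hx⟩

theorem mem_drop_iff_le_secondOcc : x ∈ v.drop k ↔ x ∈ v ∧ k ≤ secondOcc v x := by
  constructor
  · intro h
    obtain ⟨i, hi, hvi⟩ := List.mem_drop_iff_getElem.1 h
    exact ⟨hvi ▸ List.getElem_mem _, by have := le_secondOcc_of_getElem_eq _ hvi; omega⟩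
  · rintro ⟨hx, hk⟩
    refine List.mem_drop_iff_getElem.2 ⟨secondOcc v x - k, ?_, ?_⟩
    · have := secondOcc_lt_length_s4 hx
      omega
    · simp only [Nat.add_sub_cancel' hk]
      exact getElem_secondOcc hx

theorem count_eq_count_take_add_count_drop (hk : k < v.length) (hvk : v[k] = x) :
    v.count x = (v.take k).count x + 1 + (v.drop (k + 1)).count x := by
  conv_lhs => rw [← List.take_append_drop k v, List.drop_eq_getElem_cons hk, hvk]
  rw [List.count_append, List.count_cons_self]
  omega

theorem firstOcc_lt_secondOcc (h2 : 2 ≤ v.count x) : firstOcc v x < secondOcc v x := by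
  have hx : x ∈ v := List.count_pos_iff.1 (by omega)
  have hsplit := count_eq_count_take_add_count_drop (firstOcc_lt_length_s4 hx) (getElem_firstOcc hx)
  have hbefore : (v.take (firstOcc v x)).count x = 0 :=
    List.count_eq_zero.2 fun h => (mem_take_iff_firstOcc_lt.1 h).2.false
  have hafter : x ∈ v.drop (firstOcc v x + 1) := List.count_pos_iff.1 (by omega)
  exact (mem_drop_iff_le_secondOcc.1 hafter).2

theorem eq_firstOcc_or_eq_secondOcc (h2 : v.count x = 2) (hk : k < v.length) (hvk : v[k] = x) :
    k = firstOcc v x ∨ k = secondOcc v x := by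
  have hx : x ∈ v := hvk ▸ List.getElem_mem hk
  by_contra! hne
  have hbefore : x ∈ v.take k := mem_take_iff_firstOcc_lt.2
    ⟨hx, lt_of_le_of_ne (firstOcc_le_of_getElem_eq hk hvk) hne.1.symm⟩
  have hafter : x ∈ v.drop (k + 1) := mem_drop_iff_le_secondOcc.2
    ⟨hx, lt_of_le_of_ne (le_secondOcc_of_getElem_eq hk hvk) hne.2⟩
  have := count_eq_count_take_add_count_drop hk hvk
  have := List.count_pos_iff.2 hbefore
  have := List.count_pos_iff.2 hafter
  omega

end Occurrences

section SecondOccurrences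

def secondOccPairs (v : List ℕ) : List (ℕ × ℕ) :=
  (v.zipIdx.map Prod.swap).filter fun p => (v.take p.1).contains p.2

variable {v : List ℕ}

theorem pairwise_secondOccPairs : (secondOccPairs v).Pairwise fun p q => p.1 < q.1 := by
  refine List.Pairwise.filter _ (List.pairwise_iff_getElem.2 fun i j _ _ hij => ?_)
  simpa using hij

theorem mem_secondOccPairs_iff (h2 : ∀ x ∈ v, v.count x = 2) {p : ℕ × ℕ} :
    p ∈ secondOccPairs v ↔ p.2 ∈ v ∧ p.1 = secondOcc v p.2 := by
  obtain ⟨j, z⟩ := p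
  have hpos : (j, z) ∈ v.zipIdx.map Prod.swap ↔ ∃ h : j < v.length, v[j] = z := by
    simp [List.mem_zipIdx_iff_getElem?, List.getElem?_eq_some_iff]
  simp only [secondOccPairs, List.mem_filter, hpos, List.contains_iff_mem,
    mem_take_iff_firstOcc_lt]
  constructor
  · rintro ⟨⟨hj, hvj⟩, hz, hfirst⟩
    refine ⟨hz, (eq_firstOcc_or_eq_secondOcc (h2 z hz) hj hvj).resolve_left ?_⟩
    omega
  · rintro ⟨hz, rfl⟩
    exact ⟨⟨secondOcc_lt_length_s4 hz, getElem_secondOcc hz⟩, hz,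
      firstOcc_lt_secondOcc (h2 z hz).ge⟩

theorem secondOccsSubseq_eq_of_pairwise (h2 : ∀ x ∈ v, v.count x = 2) {l : List ℕ}
    (hl : ∀ x, x ∈ l ↔ x ∈ v) (hsorted : l.Pairwise fun a b => secondOcc v a < secondOcc v b) :
    secondOccsSubseq v = l := by
  set pairs := l.map fun x => (secondOcc v x, x)
  have hpairs : pairs.Pairwise fun p q => p.1 < q.1 := List.pairwise_map.2 hsorted
  have hmem : ∀ p, p ∈ secondOccPairs v ↔ p ∈ pairs := by
    rintro ⟨j, z⟩
    rw [mem_secondOccPairs_iff h2]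
    simp only [pairs, List.mem_map, Prod.mk.injEq]
    constructor
    · rintro ⟨hz, rfl⟩
      exact ⟨z, (hl z).2 hz, rfl, rfl⟩
    · rintro ⟨x, hx, rfl, rfl⟩
      exact ⟨(hl x).1 hx, rfl⟩
  have hnodup {L : List (ℕ × ℕ)} (h : L.Pairwise fun p q => p.1 < q.1) : L.Nodup :=
    h.imp fun hlt heq => hlt.ne (congrArg Prod.fst heq)
  have hperm := (List.perm_ext_iff_of_nodup (hnodup pairwise_secondOccPairs) (hnodup hpairs)).2 hmem
  have heq : secondOccPairs v = pairs :=
    hperm.eq_of_pairwise (fun _ _ _ _ hab hba => absurd hba hab.asymm) pairwise_secondOccPairs hpairs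
  change (secondOccPairs v).map Prod.snd = l
  simp [heq, pairs, Function.comp_def]

end SecondOccurrences

namespace IsTreeRep

variable {n : ℕ} {v : List ℕ} (hv : IsTreeRep n v)
include hv

theorem mem_iff {x : ℕ} : x ∈ v ↔ 1 ≤ x ∧ x ≤ n :=
  ⟨hv.2.1 x, fun ⟨h1, hn⟩ => List.count_pos_iff.1 (by rw [hv.2.2.1 x h1 hn]; omega)⟩

theorem count_eq_two {x : ℕ} (hx : x ∈ v) : v.count x = 2 :=
  hv.2.2.1 x (hv.mem_iff.1 hx).1 (hv.mem_iff.1 hx).2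

theorem strictMonoOn_secondOcc_s4 : StrictMonoOn (secondOcc v) (Set.Icc 1 n) :=
  strictMonoOn_of_lt_add_one Set.ordConnected_Icc fun a _ ha ha' => by
    simpa using hv.2.2.2.2.2 (a + 1) (by grind) ha'.2

theorem firstOcc_lt_secondOcc_pred (hn : 2 ≤ n) {x : ℕ} (hx1 : 1 ≤ x) (hxn : x ≤ n) :
    firstOcc v x < secondOcc v (n - 1) := by
  rcases hxn.eq_or_lt with rfl | hlt
  · exact hv.2.2.2.2.1 x hn le_rfl
  · calc firstOcc v x < secondOcc v x :=
          firstOcc_lt_secondOcc (hv.count_eq_two (hv.mem_iff.2 ⟨hx1, hxn⟩)).ge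
      _ ≤ secondOcc v (n - 1) :=
          hv.strictMonoOn_secondOcc_s4.monotoneOn ⟨hx1, hxn⟩ ⟨by omega, by omega⟩ (by omega)

theorem eq_secondOcc_of_secondOcc_pred_lt (hn : 2 ≤ n) {k : ℕ} (hk : secondOcc v (n - 1) < k)
    (hklen : k < v.length) : k = secondOcc v n := by
  set x := v[k]
  have hx : x ∈ v := List.getElem_mem hklen
  obtain ⟨hx1, hxn⟩ := hv.mem_iff.1 hx
  have hsecond : k = secondOcc v x :=
    (eq_firstOcc_or_eq_secondOcc (hv.count_eq_two hx) hklen rfl).resolve_left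
      fun h => by have := hv.firstOcc_lt_secondOcc_pred hn hx1 hxn; omega
  obtain rfl : x = n := by
    by_contra hne
    have := hv.strictMonoOn_secondOcc_s4.monotoneOn ⟨hx1, hxn⟩ ⟨by omega, by omega⟩
      (show x ≤ n - 1 by omega)
    omega
  exact hsecond

theorem secondOcc_pred_eq (hn : 2 ≤ n) : secondOcc v (n - 1) = 2 * n - 2 := by
  have hlen : v.length = 2 * n := hv.1
  have hlt : secondOcc v (n - 1) < secondOcc v n := hv.2.2.2.2.2 n hn le_rfl
  have := secondOcc_lt_length_s4 (hv.mem_iff.2 ⟨by omega, le_rfl⟩)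
  by_contra hne
  have := hv.eq_secondOcc_of_secondOcc_pred_lt hn (k := 2 * n - 2) (by omega) (by omega)
  have := hv.eq_secondOcc_of_secondOcc_pred_lt hn (k := 2 * n - 1) (by omega) (by omega)
  omega

theorem secondOcc_eq (hn : 2 ≤ n) : secondOcc v n = 2 * n - 1 := by
  have hlen : v.length = 2 * n := hv.1
  have := hv.secondOcc_pred_eq hn
  exact (hv.eq_secondOcc_of_secondOcc_pred_lt hn (by omega) (by omega)).symm

theorem secondOccsSubseq_eq : secondOccsSubseq v = List.range' 1 n := by
  have hrange {x : ℕ} : x ∈ List.range' 1 n ↔ 1 ≤ x ∧ x ≤ n := by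
    rw [List.mem_range'_1]
    omega
  refine secondOccsSubseq_eq_of_pairwise (fun _ => hv.count_eq_two)
    (fun _ => hrange.trans hv.mem_iff.symm) ?_
  exact (List.pairwise_lt_range' ..).imp_of_mem fun ha hb hab =>
    hv.strictMonoOn_secondOcc_s4 (hrange.1 ha) (hrange.1 hb) hab

end IsTreeRep

/-- For `n ≥ 2` and a tree representation `v` on `{1,…,n}`: every first
occurrence of a value appears strictly before the second occurrence of `n−1`;
the last entry (1-indexed position `2n`) is the second occurrence of `n`; the
entry at 1-indexed position `2n−1` is the second occurrence of `n−1`; and the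
subsequence of second occurrences, read left to right, is exactly `(1,2,…,n)`. -/
theorem stmt4 (n : ℕ) (hn : 2 ≤ n) (v : List ℕ) (hv : IsTreeRep n v) :
    (∀ x, 1 ≤ x → x ≤ n → firstOcc v x < secondOcc v (n - 1)) ∧
    (v.getD (2 * n - 1) 0 = n ∧ secondOcc v n = 2 * n - 1) ∧
    (v.getD (2 * n - 2) 0 = n - 1 ∧ secondOcc v (n - 1) = 2 * n - 2) ∧
    secondOccsSubseq v = List.range' 1 n := by
  have hmem {x : ℕ} (h1 : 1 ≤ x) (h2 : x ≤ n) : x ∈ v := hv.mem_iff.2 ⟨h1, h2⟩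
  refine ⟨fun x => hv.firstOcc_lt_secondOcc_pred hn, ⟨?_, hv.secondOcc_eq hn⟩,
    ⟨?_, hv.secondOcc_pred_eq hn⟩, hv.secondOccsSubseq_eq⟩
  · rw [← hv.secondOcc_eq hn]
    exact getD_secondOcc (hmem (by omega) le_rfl)
  · rw [← hv.secondOcc_pred_eq hn]
    exact getD_secondOcc (hmem (by omega) (by omega))
end

section
/- There exist constants c₁ > 0, c₂ > 0 and an integer n₀ such that for every n ≥ n₀ and every tree representation v on {1,…,n}, the number of distinct tree representations obtainable from v by a single HOP (the HOP neighbourhood of v) satisfies c₁·n² ≤ |N(v)| ≤ c₂·n². -/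
/-- A single HOP: for some `i ∈ {2,…,n}`, remove the first occurrence of `i`
from `v` and reinsert it at a (0-indexed) position `k` strictly after the first
entry (`1 ≤ k`) and weakly before the (resulting position of the) second
occurrence of `i-1`. -/
def IsHop (n : ℕ) (v v' : List ℕ) : Prop :=
  ∃ i k, 2 ≤ i ∧ i ≤ n ∧ 1 ≤ k ∧ k ≤ secondOcc (v.erase i) (i - 1) ∧
    v' = (v.erase i).insertIdx k i

/-!
A HOP is determined by the hopped value `i ∈ {2,…,n}` and the insertion point `k ≤ 2n`, so
`|N(v)| ≤ 2n²`. Conversely, moving the first occurrence of `i` from its position `p` to any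
position `1 ≤ k < p` gives a tree representation: positions in `v` and in the new list are the
images of positions in `v.erase i` under the strictly monotone maps `succAbove p` and
`succAbove k`, so every order constraint carries over, except the one on the first occurrence of
`i`, which only gets easier.
Distinct pairs `(i, k)` give distinct lists, since `k` is the first position where the result
differs from `v`. The first occurrences of `2,…,n` are distinct positive positions, so the number
of such pairs is at least `0 + 1 + ⋯ + (n - 2)`.
-/

section List

variable {α : Type*}

lemma insertIdx_append_of_length_eq {P Q : List α} {k : ℕ} (a : α) (hP : P.length = k) :
    (P ++ Q).insertIdx k a = P ++ a :: Q := by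
  subst hP
  induction P with
  | nil => simp
  | cons b P ih => simpa [List.insertIdx_succ_cons] using ih

lemma eq_of_take_eq_of_getElem?_ne {v w : List α} {k k' : ℕ}
    (h : w.take k = v.take k) (hk : w[k]? ≠ v[k]?)
    (h' : w.take k' = v.take k') (hk' : w[k']? ≠ v[k']?) : k = k' := by
  by_contra hne
  wlog hlt : k < k' generalizing k k'
  · exact this h' hk' h hk (Ne.symm hne) (by omega)
  apply hk
  rw [← List.getElem?_take_of_lt hlt, h', List.getElem?_take_of_lt hlt]

variable [BEq α] [LawfulBEq α]

lemma erase_append_cons {L R : List α} {c : α} (hc : c ∉ L) :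
    (L ++ c :: R).erase c = L ++ R := by
  rw [List.erase_append_right _ hc, List.erase_cons_head]

end List

lemma Finset.sum_range_card_le_sum (s : Finset ℕ) :
    ∑ i ∈ range s.card, i ≤ ∑ i ∈ s, i := by
  induction s using Finset.induction_on_max with
  | empty => simp
  | insert a s hlt ih =>
    have ha : a ∉ s := fun h => lt_irrefl a (hlt a h)
    have hcard : s.card ≤ a := by
      simpa using Finset.card_le_card (fun x hx => Finset.mem_range.2 (hlt x hx) : s ⊆ range a)
    rw [Finset.card_insert_of_notMem ha, Finset.sum_range_succ, Finset.sum_insert ha]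
    omega

/-- The position of index `t` after an entry is inserted at index `k` (as in `Fin.succAbove`). -/
def succAbove (k t : ℕ) : ℕ := if t < k then t else t + 1

lemma succAbove_strictMono (k : ℕ) : StrictMono (succAbove k) := by
  intro s t hst
  unfold succAbove
  split_ifs <;> omega

lemma lt_succAbove_iff {k t : ℕ} : k < succAbove k t ↔ k ≤ t := by
  unfold succAbove
  split_ifs <;> omega

lemma List.idxOf_append_cons {α : Type*} [BEq α] [LawfulBEq α] {P Q : List α} {c x : α}
    (hx : x ∈ P ∨ x ≠ c) : (P ++ c :: Q).idxOf x = succAbove P.length ((P ++ Q).idxOf x) := by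
  rw [List.idxOf_append, List.idxOf_append]
  by_cases hxP : x ∈ P
  · simp [hxP, succAbove, List.idxOf_lt_length_iff]
  · have hxc : c ≠ x := (hx.resolve_left hxP).symm
    simp only [hxP, ↓reduceIte, List.idxOf_cons_ne _ hxc, succAbove, add_lt_iff_neg_right,
      not_lt_zero]
    omega

section Occurrences

variable {P Q : List ℕ} {c x : ℕ}

lemma firstOcc_append_cons (hx : x ≠ c) :
    firstOcc (P ++ c :: Q) x = succAbove P.length (firstOcc (P ++ Q) x) :=
  List.idxOf_append_cons (Or.inr hx)

lemma firstOcc_append_cons_self (hc : c ∉ P) : firstOcc (P ++ c :: Q) c = P.length := by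
  simp [firstOcc, List.idxOf_append, hc]

lemma secondOcc_append_cons (hx : x ∈ P ++ Q) (hxc : x ∈ Q ∨ x ≠ c) :
    secondOcc (P ++ c :: Q) x = succAbove P.length (secondOcc (P ++ Q) x) := by
  have hrev : (P ++ c :: Q).reverse = Q.reverse ++ c :: P.reverse := by simp
  have hlt : (P ++ Q).reverse.idxOf x < (P ++ Q).reverse.length :=
    List.idxOf_lt_length_iff.2 (List.mem_reverse.2 hx)
  unfold secondOcc
  rw [hrev, List.idxOf_append_cons (by simpa using hxc)]
  simp only [List.reverse_append, List.length_reverse, List.length_append,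
    List.length_cons] at hlt ⊢
  unfold succAbove
  split_ifs <;> omega

lemma secondOcc_append_cons_of_mem (hc : c ∈ Q) (hx : x ∈ P ++ c :: Q) :
    secondOcc (P ++ c :: Q) x = succAbove P.length (secondOcc (P ++ Q) x) := by
  by_cases hxc : x = c
  · subst hxc
    exact secondOcc_append_cons (List.mem_append_right P hc) (Or.inl hc)
  · refine secondOcc_append_cons ?_ (Or.inr hxc)
    simp only [List.mem_append, List.mem_cons] at hx ⊢
    tauto

end Occurrences

lemma IsTreeRep.mem_s8 {n j : ℕ} {v : List ℕ} (hv : IsTreeRep n v) (hj : 1 ≤ j) (hjn : j ≤ n) :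
    j ∈ v :=
  List.count_pos_iff.1 (by rw [hv.2.2.1 j hj hjn]; omega)

lemma IsTreeRep.one_le_firstOcc {n i : ℕ} {v : List ℕ} (hv : IsTreeRep n v) (hi : 2 ≤ i)
    (hin : i ≤ n) : 1 ≤ firstOcc v i := by
  obtain ⟨L, R, rfl, hiL⟩ := List.eq_append_cons_of_mem (hv.mem_s8 (by omega) hin)
  rw [firstOcc_append_cons_self hiL]
  rcases L with _ | ⟨a, L⟩
  · have : i = 1 := hv.2.2.2.1
    omega
  · simp

lemma IsTreeRep.move_earlier {n i : ℕ} {P M R : List ℕ} (hv : IsTreeRep n (P ++ M ++ i :: R))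
    (hiPM : i ∉ P ++ M) (hi : 2 ≤ i) (hin : i ≤ n) (hP : P ≠ []) :
    IsTreeRep n (P ++ i :: (M ++ R)) := by
  have hmem (j : ℕ) (hj : 1 ≤ j) (hjn : j ≤ n) : j ∈ P ++ M ++ i :: R := hv.mem_s8 hj hjn
  obtain ⟨hlen, hbound, hcount, hhead, hfirst, hsecond⟩ := hv
  have hiR : i ∈ R := by
    have := hcount i (by omega) hin
    rw [List.count_append, List.count_cons_self, List.count_eq_zero_of_not_mem hiPM] at this
    exact List.count_pos_iff.1 (by omega)
  have hperm : (P ++ i :: (M ++ R)).Perm (P ++ M ++ i :: R) := by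
    refine List.perm_middle.trans ?_
    rw [← List.append_assoc]
    exact List.perm_middle.symm
  have first_v (x) (hx : x ≠ i) : firstOcc (P ++ M ++ i :: R) x =
      succAbove (P ++ M).length (firstOcc (P ++ (M ++ R)) x) := by
    rw [firstOcc_append_cons hx, List.append_assoc]
  have first_w (x) (hx : x ≠ i) := firstOcc_append_cons (P := P) (Q := M ++ R) hx
  have second_v (x) (hx : x ∈ P ++ M ++ i :: R) : secondOcc (P ++ M ++ i :: R) x =
      succAbove (P ++ M).length (secondOcc (P ++ (M ++ R)) x) := by
    rw [secondOcc_append_cons_of_mem hiR hx, List.append_assoc]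
  have second_w (x) (hx : x ∈ P ++ M ++ i :: R) :=
    secondOcc_append_cons_of_mem (List.mem_append_right M hiR) (hperm.mem_iff.2 hx)
  have transfer (a b : ℕ) : succAbove (P ++ M).length a < succAbove (P ++ M).length b ↔
      succAbove P.length a < succAbove P.length b :=
    (succAbove_strictMono _).lt_iff_lt.trans (succAbove_strictMono _).lt_iff_lt.symm
  refine ⟨hperm.length_eq.trans hlen, fun x hx => hbound x (hperm.mem_iff.1 hx),
    fun j hj hjn => hperm.count_eq j ▸ hcount j hj hjn, ?_, ?_, ?_⟩
  · have hP0 : 0 < P.length := List.length_pos_iff.2 hP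
    rw [List.append_assoc, List.getD_append _ _ _ _ hP0] at hhead
    rwa [List.getD_append _ _ _ _ hP0]
  · intro j hj hjn
    have h := hfirst j hj hjn
    rw [second_v _ (hmem _ (by omega) (by omega))] at h
    rw [second_w _ (hmem _ (by omega) (by omega))]
    rcases eq_or_ne j i with rfl | hji
    · rw [firstOcc_append_cons_self hiPM, lt_succAbove_iff] at h
      rw [firstOcc_append_cons_self (fun h => hiPM (List.mem_append_left M h)), lt_succAbove_iff]
      simp only [List.length_append] at h
      omega
    · rwa [first_v _ hji, transfer, ← first_w _ hji] at h
  · intro j hj hjn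
    have h := hsecond j hj hjn
    rwa [second_v _ (hmem _ (by omega) (by omega)), second_v _ (hmem _ (by omega) hjn), transfer,
      ← second_w _ (hmem _ (by omega) (by omega)), ← second_w _ (hmem _ (by omega) hjn)] at h

def hop (v : List ℕ) (i k : ℕ) : List ℕ := (v.erase i).insertIdx k i

def hopNbhd (n : ℕ) (v : List ℕ) : Set (List ℕ) :=
  {w | w ≠ v ∧ IsTreeRep n w ∧ IsHop n v w}

section Hop

variable {v L R : List ℕ} {i k : ℕ}

lemma hop_append_cons (hiL : i ∉ L) (hk : k ≤ L.length) :
    hop (L ++ i :: R) i k = L.take k ++ i :: (L.drop k ++ R) := by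
  rw [hop, erase_append_cons hiL, ← L.take_append_drop k, List.append_assoc,
    insertIdx_append_of_length_eq i (List.length_take_of_le hk), L.take_append_drop k]

lemma take_hop (hiv : i ∈ v) (hk : k ≤ firstOcc v i) : (hop v i k).take k = v.take k := by
  obtain ⟨L, R, rfl, hiL⟩ := List.eq_append_cons_of_mem hiv
  rw [firstOcc_append_cons_self hiL] at hk
  rw [hop_append_cons hiL hk, List.take_left' (List.length_take_of_le hk),
    List.take_append_of_le_length hk]

lemma getElem?_hop_self (hiv : i ∈ v) (hk : k ≤ firstOcc v i) : (hop v i k)[k]? = some i := by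
  obtain ⟨L, R, rfl, hiL⟩ := List.eq_append_cons_of_mem hiv
  rw [firstOcc_append_cons_self hiL] at hk
  rw [hop_append_cons hiL hk, List.getElem?_append_right (List.length_take_of_le hk).le]
  simp [List.length_take_of_le hk]

lemma getElem?_ne_of_lt_firstOcc (hiv : i ∈ v) (hk : k < firstOcc v i) : v[k]? ≠ some i := by
  obtain ⟨L, R, rfl, hiL⟩ := List.eq_append_cons_of_mem hiv
  rw [firstOcc_append_cons_self hiL] at hk
  rw [List.getElem?_append_left hk]
  exact fun h => hiL (List.mem_of_getElem? h)

end Hop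

lemma IsTreeRep.hop_mem_hopNbhd {n i k : ℕ} {v : List ℕ} (hv : IsTreeRep n v) (hi : 2 ≤ i)
    (hin : i ≤ n) (hk : 1 ≤ k) (hkp : k < firstOcc v i) : hop v i k ∈ hopNbhd n v := by
  have hiv := hv.mem_s8 (by omega) hin
  refine ⟨fun h => getElem?_ne_of_lt_firstOcc hiv hkp (h ▸ getElem?_hop_self hiv hkp.le), ?_,
    i, k, hi, hin, hk, ?_, rfl⟩
  all_goals
    obtain ⟨L, R, rfl, hiL⟩ := List.eq_append_cons_of_mem hiv
    rw [firstOcc_append_cons_self hiL] at hkp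
  · rw [hop_append_cons hiL hkp.le]
    rw [← L.take_append_drop k] at hv hiL
    exact hv.move_earlier hiL hi hin (List.length_pos_iff.1 (by rw [List.length_take]; omega))
  · have hprev : i - 1 ∈ L ++ R := by
      have := hv.mem_s8 (j := i - 1) (by omega) (by omega)
      simp only [List.mem_append, List.mem_cons] at this ⊢
      rcases this with h | h | h
      exacts [Or.inl h, absurd h (by omega), Or.inr h]
    have h := hv.2.2.2.2.1 i hi hin
    rw [firstOcc_append_cons_self hiL, secondOcc_append_cons hprev (Or.inr (by omega)),
      lt_succAbove_iff] at h
    rw [erase_append_cons hiL]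
    omega

lemma hop_injOn {v : List ℕ} :
    Set.InjOn (fun q : (_ : ℕ) × ℕ => hop v q.1 q.2)
      {q | q.1 ∈ v ∧ q.2 < firstOcc v q.1} := by
  rintro ⟨i, k⟩ ⟨hiv, hk⟩ ⟨i', k'⟩ ⟨hiv', hk'⟩ (h : hop v i k = hop v i' k')
  have hself := getElem?_hop_self hiv hk.le
  have hself' := getElem?_hop_self hiv' hk'.le
  obtain rfl : k = k' := by
    refine eq_of_take_eq_of_getElem?_ne (w := hop v i k) (take_hop hiv hk.le) ?_
      (h ▸ take_hop hiv' hk'.le) ?_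
    · rw [hself]; exact (getElem?_ne_of_lt_firstOcc hiv hk).symm
    · rw [h, hself']; exact (getElem?_ne_of_lt_firstOcc hiv' hk').symm
  rw [h, hself'] at hself
  obtain rfl : i' = i := Option.some_inj.1 hself
  rfl

lemma hopNbhd_subset_image {n : ℕ} {v : List ℕ} (hv : v.length = 2 * n) :
    hopNbhd n v ⊆ (Finset.Icc 1 n ×ˢ Finset.Icc 1 (2 * n)).image fun q => hop v q.1 q.2 := by
  rintro w ⟨-, -, i, k, hi, hin, hk, hks, rfl⟩
  have hk2 : k ≤ 2 * n := by
    have := (v.erase_sublist (a := i)).length_le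
    unfold secondOcc at hks
    omega
  simp only [Finset.coe_image, Set.mem_image, Finset.mem_coe, Finset.mem_product, Finset.mem_Icc]
  exact ⟨(i, k), ⟨⟨by omega, hin⟩, hk, hk2⟩, rfl⟩

lemma ncard_hopNbhd_le {n : ℕ} {v : List ℕ} (hv : v.length = 2 * n) :
    (hopNbhd n v).ncard ≤ 2 * n ^ 2 := by
  calc (hopNbhd n v).ncard
      ≤ ((Finset.Icc 1 n ×ˢ Finset.Icc 1 (2 * n)).image fun q => hop v q.1 q.2).card := by
        rw [← Set.ncard_coe_finset]
        exact Set.ncard_le_ncard (hopNbhd_subset_image hv) (Finset.finite_toSet _)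
    _ ≤ (Finset.Icc 1 n ×ˢ Finset.Icc 1 (2 * n)).card := Finset.card_image_le
    _ = 2 * n ^ 2 := by simp only [Finset.card_product, Nat.card_Icc, add_tsub_cancel_right]; ring

lemma IsTreeRep.sum_firstOcc_le_ncard_hopNbhd {n : ℕ} {v : List ℕ} (hv : IsTreeRep n v) :
    ∑ i ∈ Finset.Icc 2 n, (firstOcc v i - 1) ≤ (hopNbhd n v).ncard := by
  set D := (Finset.Icc 2 n).sigma fun i => Finset.Ico 1 (firstOcc v i)
  have hD : ∀ q ∈ D, 2 ≤ q.1 ∧ q.1 ≤ n ∧ 1 ≤ q.2 ∧ q.2 < firstOcc v q.1 := by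
    intro q hq
    simp only [D, Finset.mem_sigma, Finset.mem_Icc, Finset.mem_Ico] at hq
    omega
  have hinj : Set.InjOn (fun q : (_ : ℕ) × ℕ => hop v q.1 q.2) D := by
    refine hop_injOn.mono fun q hq => ?_
    obtain ⟨h1, h2, -, h4⟩ := hD q hq
    exact ⟨hv.mem_s8 (by omega) h2, h4⟩
  have hsub : ↑(D.image fun q => hop v q.1 q.2) ⊆ hopNbhd n v := by
    intro w hw
    simp only [Finset.coe_image, Set.mem_image, Finset.mem_coe] at hw
    obtain ⟨q, hq, rfl⟩ := hw
    obtain ⟨h1, h2, h3, h4⟩ := hD q hq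
    exact hv.hop_mem_hopNbhd h1 h2 h3 h4
  calc ∑ i ∈ Finset.Icc 2 n, (firstOcc v i - 1) = D.card := by simp [D, Finset.card_sigma]
    _ = (D.image fun q => hop v q.1 q.2).card := (Finset.card_image_of_injOn hinj).symm
    _ ≤ (hopNbhd n v).ncard := by
      rw [← Set.ncard_coe_finset]
      exact Set.ncard_le_ncard hsub ((Finset.finite_toSet _).subset (hopNbhd_subset_image hv.1))

lemma IsTreeRep.sum_range_le_sum_firstOcc {n : ℕ} {v : List ℕ} (hv : IsTreeRep n v) :
    ∑ t ∈ Finset.range (n - 1), t ≤ ∑ i ∈ Finset.Icc 2 n, (firstOcc v i - 1) := by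
  have hinj : Set.InjOn (fun i => firstOcc v i - 1) (Finset.Icc 2 n) := by
    intro a ha b hb hab
    simp only [Finset.coe_Icc, Set.mem_Icc] at ha hb hab
    have := hv.one_le_firstOcc ha.1 ha.2
    have := hv.one_le_firstOcc hb.1 hb.2
    exact (List.idxOf_inj (hv.mem_s8 (by omega) ha.2)).1 (by unfold firstOcc at *; omega)
  have := Finset.sum_range_card_le_sum ((Finset.Icc 2 n).image fun i => firstOcc v i - 1)
  rwa [Finset.sum_image hinj, Finset.card_image_of_injOn hinj, Nat.card_Icc,
    show n + 1 - 2 = n - 1 by omega] at this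

lemma IsTreeRep.sq_le_eight_mul_ncard_hopNbhd {n : ℕ} {v : List ℕ} (hv : IsTreeRep n v)
    (hn : 4 ≤ n) : n ^ 2 ≤ 8 * (hopNbhd n v).ncard := by
  have h := hv.sum_range_le_sum_firstOcc.trans hv.sum_firstOcc_le_ncard_hopNbhd
  have htriangle := Finset.sum_range_id_mul_two (n - 1)
  obtain ⟨m, rfl⟩ : ∃ m, n = m + 4 := ⟨n - 4, by omega⟩
  simp only [show m + 4 - 1 = m + 3 by omega, show m + 3 - 1 = m + 2 by omega] at h htriangle
  nlinarith

/-- There exist constants `c₁, c₂ > 0` and `n₀` such that for every `n ≥ n₀`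
and every tree representation `v` on `{1,…,n}`, the HOP neighbourhood
`N(v) = {w ≠ v | w is a tree representation resulting from v by a single HOP}`
satisfies `c₁·n² ≤ |N(v)| ≤ c₂·n²`. -/
theorem stmt8 :
    ∃ c₁ c₂ : ℝ, 0 < c₁ ∧ 0 < c₂ ∧ ∃ n₀ : ℕ, ∀ n, n₀ ≤ n →
      ∀ v : List ℕ, IsTreeRep n v →
        c₁ * (n : ℝ) ^ 2 ≤ ({w | w ≠ v ∧ IsTreeRep n w ∧ IsHop n v w}.ncard : ℝ) ∧
        ({w | w ≠ v ∧ IsTreeRep n w ∧ IsHop n v w}.ncard : ℝ) ≤ c₂ * (n : ℝ) ^ 2 := by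
  refine ⟨1 / 8, 2, by norm_num, by norm_num, 4, fun n hn v hv => ⟨?_, ?_⟩⟩
  · have h : ((n ^ 2 : ℕ) : ℝ) ≤ ((8 * (hopNbhd n v).ncard : ℕ) : ℝ) :=
      Nat.cast_le.2 (hv.sq_le_eight_mul_ncard_hopNbhd hn)
    push_cast at h
    change _ ≤ ((hopNbhd n v).ncard : ℝ)
    linarith
  · exact_mod_cast ncard_hopNbhd_le hv.1
end
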